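/- arXiv:2106.07116 — 4 statements merged into one kernel-verified Lean document; each statement's English description precedes it below -/
import Mathlib

section
/- If S_1, ..., S_ℓ are pairwise disjoint subsets of N and f is a non-negative submodular function, then for any set O ⊆ N, the sum ∑_{i=1}^ℓ f(S_i ∪ O) ≥ (ℓ - 1)·f(O) + f(S_1 ∪ ⋯ ∪ S_ℓ ∪ O). -/
/-!
Induct on the number of sets. Adding a set `S` disjoint from the union `U` of the previous
ones, the sets `S ∪ O` and `U ∪ O` meet exactly in `O`, so submodularity gives
`f (S ∪ U ∪ O) + f O ≤ f (S ∪ O) + f (U ∪ O)`: each new set costs at most one extra copy of `f O`.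
-/

section Submodular

variable {α β ι : Type*} [DistribLattice α] [OrderBot α]
  [AddCommMonoid β] [PartialOrder β] [IsOrderedAddMonoid β]

theorem sup_inf_sup_eq_of_disjoint {a b : α} (hab : Disjoint a b) (c : α) :
    (a ⊔ c) ⊓ (b ⊔ c) = c := by
  rw [← sup_inf_right, hab.eq_bot, bot_sup_eq]

theorem card_nsmul_add_le_sum_sup_add_of_pairwiseDisjoint {f : α → β}
    (hsub : ∀ x y, f (x ⊔ y) + f (x ⊓ y) ≤ f x + f y)
    {s : Finset ι} {S : ι → α} (hS : (s : Set ι).PairwiseDisjoint S) (o : α) :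
    s.card • f o + f (s.sup S ⊔ o) ≤ ∑ i ∈ s, f (S i ⊔ o) + f o := by
  classical
  induction s using Finset.induction_on with
  | empty => simp [add_comm]
  | insert a s ha ih =>
    rw [Finset.coe_insert] at hS
    have hdisj : Disjoint (S a) (s.sup S) :=
      Finset.disjoint_sup_right.2 fun i hi =>
        hS (Set.mem_insert a _) (Set.mem_insert_of_mem a hi) (ne_of_mem_of_not_mem hi ha).symm
    have hstep : f (S a ⊔ s.sup S ⊔ o) + f o ≤ f (S a ⊔ o) + f (s.sup S ⊔ o) := by
      have := hsub (S a ⊔ o) (s.sup S ⊔ o)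
      rwa [sup_inf_sup_eq_of_disjoint hdisj, sup_sup_sup_comm, sup_idem] at this
    calc (insert a s).card • f o + f ((insert a s).sup S ⊔ o)
        = s.card • f o + (f (S a ⊔ s.sup S ⊔ o) + f o) := by
          rw [Finset.card_insert_of_notMem ha, Finset.sup_insert, succ_nsmul]; abel
      _ ≤ s.card • f o + (f (S a ⊔ o) + f (s.sup S ⊔ o)) := by gcongr
      _ ≤ f (S a ⊔ o) + (∑ i ∈ s, f (S i ⊔ o) + f o) := by
          rw [add_left_comm]
          exact add_le_add_right (ih (hS.subset (Set.subset_insert a _))) _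
      _ = ∑ i ∈ insert a s, f (S i ⊔ o) + f o := by
          rw [Finset.sum_insert ha, add_assoc]

end Submodular

theorem disjoint_union_lower_bound_general {N : Type*} [DecidableEq N]
    (f : Finset N → ℝ)
    (hsub : ∀ X Y : Finset N, f X + f Y ≥ f (X ∪ Y) + f (X ∩ Y))
    (ℓ : ℕ) (S : Fin ℓ → Finset N)
    (hdisj : ∀ i j : Fin ℓ, i ≠ j → Disjoint (S i) (S j))
    (O : Finset N) :
    ∑ i : Fin ℓ, f (S i ∪ O) ≥
      ((ℓ : ℝ) - 1) * f O + f ((Finset.univ.biUnion S) ∪ O) := by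
  have h := card_nsmul_add_le_sum_sup_add_of_pairwiseDisjoint hsub
    (s := Finset.univ) (S := S) (fun i _ j _ hij => hdisj i j hij) O
  rw [Finset.card_univ, Fintype.card_fin, nsmul_eq_mul, Finset.sup_eq_biUnion] at h
  simp only [Finset.sup_eq_union] at h
  linarith

/-- For pairwise disjoint sets S_1,...,S_ℓ and non-negative submodular f,
    ∑ f(S_i ∪ O) ≥ (ℓ-1) f(O) + f(S_1 ∪ ⋯ ∪ S_ℓ ∪ O). -/
theorem disjoint_union_lower_bound {N : Type*} [Fintype N] [DecidableEq N]
    (f : Finset N → ℝ)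
    (hf0 : ∀ A : Finset N, 0 ≤ f A)
    (hsub : ∀ X Y : Finset N, f X + f Y ≥ f (X ∪ Y) + f (X ∩ Y))
    (ℓ : ℕ) (hℓ : 1 ≤ ℓ) (S : Fin ℓ → Finset N)
    (hdisj : ∀ i j : Fin ℓ, i ≠ j → Disjoint (S i) (S j))
    (O : Finset N) :
    ∑ i : Fin ℓ, f (S i ∪ O) ≥
      ((ℓ : ℝ) - 1) * f O + f ((Finset.univ.biUnion S) ∪ O) :=
  disjoint_union_lower_bound_general f hsub ℓ S hdisj O
end

section
/- Let g be a non-negative submodular function on 2^N and let Y be a random subset of N such that each element of N belongs to Y with probability at most p (not necessarily independently). Then E[g(Y)] ≥ (1 - p)·g(∅). -/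
/-!
Write `x u = Pr[u ∈ Y]` and build up the ground set from `T = ∅` by adding elements in
decreasing order of `x`. By submodularity (diminishing returns), adding `v` increases
`E[g(Y ∩ T)]` by at least `x v · (g(T ∪ {v}) - g(T))`. Summing by parts bounds `E[g(Y)]` below by
the Lovász extension of `g` at `x`, all of whose terms are nonnegative except the one of weight
`1 - max x ≥ 1 - p` on `g ∅`.
-/

open Finset

section

variable {N Ω : Type*} [DecidableEq N] [Fintype Ω]

theorem Finset.sub_le_sub_of_submodular {g : Finset N → ℝ}
    (hsub : ∀ X Y : Finset N, g X + g Y ≥ g (X ∪ Y) + g (X ∩ Y))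
    {S T : Finset N} {v : N} (hST : S ⊆ T) (hv : v ∉ T) :
    g (insert v T) - g T ≤ g (insert v S) - g S := by
  have h := hsub (insert v S) T
  rw [insert_union, union_eq_right.2 hST, insert_inter_of_notMem hv, inter_eq_left.2 hST] at h
  linarith

def memProb (μ : Ω → ℝ) (Y : Ω → Finset N) (u : N) : ℝ :=
  ∑ ω, if u ∈ Y ω then μ ω else 0

theorem memProb_nonneg {μ : Ω → ℝ} (hμ0 : ∀ ω, 0 ≤ μ ω) (Y : Ω → Finset N) (u : N) :
    0 ≤ memProb μ Y u :=
  sum_nonneg fun ω _ => by split_ifs <;> simp [hμ0 ω]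

variable {μ : Ω → ℝ} {g : Finset N → ℝ} (Y : Ω → Finset N)

theorem sum_mul_inter_insert_ge (hμ0 : ∀ ω, 0 ≤ μ ω)
    (hsub : ∀ X Y : Finset N, g X + g Y ≥ g (X ∪ Y) + g (X ∩ Y)) {T : Finset N} {v : N}
    (hv : v ∉ T) :
    ∑ ω, μ ω * g (Y ω ∩ T) + memProb μ Y v * (g (insert v T) - g T) ≤
      ∑ ω, μ ω * g (Y ω ∩ insert v T) := by
  rw [memProb, sum_mul, ← sum_add_distrib]
  refine sum_le_sum fun ω _ => ?_
  by_cases hvY : v ∈ Y ω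
  · rw [if_pos hvY, inter_insert_of_mem hvY, ← le_sub_iff_add_le', ← mul_sub]
    exact mul_le_mul_of_nonneg_left
      (sub_le_sub_of_submodular hsub inter_subset_right hv) (hμ0 ω)
  · simp [hvY, inter_insert_of_notMem hvY]

/-- `m` is generalized because the induction hypothesis is used with `m = Pr[v ∈ Y]` for the
newly added element `v`, which minimizes `Pr[· ∈ Y]` on the larger set. -/
theorem sum_mul_inter_ge (hμ0 : ∀ ω, 0 ≤ μ ω) (hμ1 : ∑ ω, μ ω = 1)
    (hg0 : ∀ A : Finset N, 0 ≤ g A)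
    (hsub : ∀ X Y : Finset N, g X + g Y ≥ g (X ∪ Y) + g (X ∩ Y))
    {q : ℝ} (T : Finset N) (hq : ∀ u ∈ T, memProb μ Y u ≤ q) {m : ℝ} (hmq : m ≤ q)
    (hm : ∀ u ∈ T, m ≤ memProb μ Y u) :
    (1 - q) * g ∅ + m * g T ≤ ∑ ω, μ ω * g (Y ω ∩ T) := by
  induction T using induction_on_min_value (memProb μ Y) generalizing m with
  | empty =>
    simp only [inter_empty, ← sum_mul, hμ1]
    nlinarith [hg0 ∅]
  | insert v T hv hmin ih =>
    have hvq := hq v (mem_insert_self v T)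
    have hT := ih (fun u hu => hq u (mem_insert_of_mem hu)) hvq hmin
    have hmv := hm v (mem_insert_self v T)
    calc (1 - q) * g ∅ + m * g (insert v T)
        ≤ (1 - q) * g ∅ + memProb μ Y v * g T + memProb μ Y v * (g (insert v T) - g T) := by
          nlinarith [hg0 (insert v T)]
      _ ≤ ∑ ω, μ ω * g (Y ω ∩ insert v T) := by
          linarith [sum_mul_inter_insert_ge Y hμ0 hsub hv]

end

theorem random_subset_lower_bound_general {N Ω : Type*} [Fintype N] [DecidableEq N] [Fintype Ω]
    (μ : Ω → ℝ) (hμ0 : ∀ ω, 0 ≤ μ ω) (hμ1 : ∑ ω, μ ω = 1)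
    (g : Finset N → ℝ)
    (hg0 : ∀ A : Finset N, 0 ≤ g A)
    (hsub : ∀ X Y : Finset N, g X + g Y ≥ g (X ∪ Y) + g (X ∩ Y))
    (Y : Ω → Finset N) (p : ℝ) (hp0 : 0 ≤ p)
    (hmarg : ∀ u : N, ∑ ω, (if u ∈ Y ω then μ ω else 0) ≤ p) :
    ∑ ω, μ ω * g (Y ω) ≥ (1 - p) * g ∅ := by
  have h := sum_mul_inter_ge Y hμ0 hμ1 hg0 hsub univ (fun u _ => hmarg u) hp0
    (fun u _ => memProb_nonneg hμ0 Y u)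
  simpa only [inter_univ, zero_mul, add_zero] using h

/-- If each element belongs to the random set Y with probability at most p, then
    E[g(Y)] ≥ (1-p)·g(∅) for non-negative submodular g. -/
theorem random_subset_lower_bound {N Ω : Type*} [Fintype N] [DecidableEq N] [Fintype Ω]
    (μ : Ω → ℝ) (hμ0 : ∀ ω, 0 ≤ μ ω) (hμ1 : ∑ ω, μ ω = 1)
    (g : Finset N → ℝ)
    (hg0 : ∀ A : Finset N, 0 ≤ g A)
    (hsub : ∀ X Y : Finset N, g X + g Y ≥ g (X ∪ Y) + g (X ∩ Y))
    (Y : Ω → Finset N) (p : ℝ) (hp0 : 0 ≤ p) (hp1 : p ≤ 1)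
    (hmarg : ∀ u : N, ∑ ω, (if u ∈ Y ω then μ ω else 0) ≤ p) :
    ∑ ω, μ ω * g (Y ω) ≥ (1 - p) * g ∅ :=
  random_subset_lower_bound_general μ hμ0 hμ1 g hg0 hsub Y p hp0 hmarg
end

section
/- Let (N, I) be a k-system, let S = {z₁,...,z_q} ∈ I be built incrementally (with prefixes S_t), and let Q ∈ I be a set such that every u ∈ Q satisfies S ∪ {u} ∉ I or u ∈ S. Then there exists a mapping σ : Q → S such that (1) for each u ∈ Q, S_{t-1} ∪ {u} ∈ I where z_t = σ(u); (2) each element of S has at most k preimages under σ; and (3) σ(u) = u for every u ∈ Q ∩ S. -/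
/-!
Give each `u ∈ Q` a deadline `m u`: its own index if `u ∈ S`, and otherwise the last index `i`
with `insert u (prefixSet z i)` independent, so that the closed prefix `{z j | j ≤ m u}` spans
`u`. The elements of `Q` with deadline at most `t` then form an independent set spanned by the
closed prefix up to `t`; comparing two bases of their union, the `k`-system inequality allows
at most `k (t + 1)` of them. This is Hall's condition for placing each `u` at or before its
deadline, elements of `S` exactly at their (distinct) deadlines, with at most `k` per index.
-/

/-- X is a base (maximal independent subset) of Y. -/
def IsBaseOf {N : Type*} [DecidableEq N] (Indep : Finset N → Prop)
    (X Y : Finset N) : Prop :=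
  X ⊆ Y ∧ Indep X ∧ ∀ u ∈ Y \ X, ¬ Indep (insert u X)

/-- The prefix S_t = {z₁,...,z_t} of the ordered elements z : Fin q → N,
    where `prefixSet z i` collects the elements with index < i. -/
def prefixSet {N : Type*} [DecidableEq N] {q : ℕ} (z : Fin q → N) (i : Fin q) : Finset N :=
  (Finset.univ.filter (fun j : Fin q => j < i)).image z

open Finset

section Prefix

variable {N : Type*} [DecidableEq N] {q n : ℕ}

def closedPrefix (z : Fin q → N) (i : Fin q) : Finset N :=
  (Iic i).image z

theorem prefixSet_eq_image_Iio (z : Fin q → N) (i : Fin q) :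
    prefixSet z i = (Iio i).image z := by
  rw [prefixSet, filter_gt_eq_Iio]

theorem prefixSet_mono (z : Fin q → N) : Monotone (prefixSet z) := fun _ _ hij => by
  simp only [prefixSet_eq_image_Iio]
  exact image_subset_image (Iio_subset_Iio hij)

theorem closedPrefix_mono (z : Fin q → N) : Monotone (closedPrefix z) := fun _ _ hij =>
  image_subset_image (Iic_subset_Iic.2 hij)

theorem insert_prefixSet (z : Fin q → N) (i : Fin q) :
    insert (z i) (prefixSet z i) = closedPrefix z i := by
  rw [prefixSet_eq_image_Iio, ← image_insert, Iio_insert, closedPrefix]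

theorem card_closedPrefix_le (z : Fin q → N) (i : Fin q) :
    #(closedPrefix z i) ≤ #(Iic i) :=
  card_image_le

theorem prefixSet_zero (z : Fin (n + 1) → N) : prefixSet z 0 = ∅ := by
  simp [prefixSet]

theorem prefixSet_succ (z : Fin (n + 1) → N) (i : Fin n) :
    prefixSet z i.succ = closedPrefix z i.castSucc := by
  have hIio : Iio i.succ = Iic i.castSucc :=
    ext fun j => by rw [mem_Iio, mem_Iic, Fin.le_castSucc_iff]
  rw [prefixSet_eq_image_Iio, closedPrefix, hIio]

theorem closedPrefix_last (z : Fin (n + 1) → N) :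
    closedPrefix z (Fin.last n) = univ.image z := by
  rw [closedPrefix, ← Fin.top_eq_last, Iic_top]

end Prefix

section KSystem

def Spans {N : Type*} [DecidableEq N] (Indep : Finset N → Prop) (X : Finset N) (u : N) : Prop :=
  u ∈ X ∨ ¬ Indep (insert u X)

variable {N : Type*} [DecidableEq N] {Indep : Finset N → Prop}

theorem Spans.mono (hdown : ∀ X Y : Finset N, X ⊆ Y → Indep Y → Indep X) {X Y : Finset N}
    {u : N} (h : Spans Indep X u) (hXY : X ⊆ Y) : Spans Indep Y u :=
  h.imp (fun hu => hXY hu) fun hdep hind => hdep (hdown _ _ (insert_subset_insert _ hXY) hind)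

theorem exists_isBaseOf_superset {T Y : Finset N} (hTY : T ⊆ Y) (hT : Indep T) :
    ∃ B, T ⊆ B ∧ IsBaseOf Indep B Y := by
  classical
  obtain ⟨B, hB, hBmax⟩ := exists_max_image {X ∈ Y.powerset | T ⊆ X ∧ Indep X} card
    ⟨T, mem_filter.2 ⟨mem_powerset.2 hTY, subset_rfl, hT⟩⟩
  obtain ⟨hBY, hTB, hBI⟩ := by simpa only [mem_filter, mem_powerset] using hB
  refine ⟨B, hTB, hBY, hBI, fun u hu hind => ?_⟩
  obtain ⟨huY, huB⟩ := mem_sdiff.1 hu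
  have := hBmax (insert u B) (mem_filter.2
    ⟨mem_powerset.2 (insert_subset huY hBY), hTB.trans (subset_insert _ _), hind⟩)
  rw [card_insert_of_notMem huB] at this
  omega

-- `X` is a base of `X ∪ A`, and `A` extends to another one.
theorem card_le_mul_card_of_spans {k : ℕ}
    (hksys : ∀ Y X₁ X₂ : Finset N, IsBaseOf Indep X₁ Y → IsBaseOf Indep X₂ Y →
      X₁.card ≤ k * X₂.card)
    {A X : Finset N} (hA : Indep A) (hX : Indep X) (hspan : ∀ u ∈ A, Spans Indep X u) :
    #A ≤ k * #X := by
  obtain ⟨B, hAB, hB⟩ := exists_isBaseOf_superset (subset_union_right : A ⊆ X ∪ A) hA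
  have hXbase : IsBaseOf Indep X (X ∪ A) := by
    refine ⟨subset_union_left, hX, fun u hu => ?_⟩
    obtain ⟨huXA, huX⟩ := mem_sdiff.1 hu
    exact (hspan u ((mem_union.1 huXA).resolve_left huX)).resolve_left huX
  exact (card_le_card hAB).trans (hksys _ _ _ hB hXbase)

end KSystem

section Schedule

variable {α ι : Type*} [Fintype α] [LinearOrder ι] [LocallyFiniteOrderBot ι]

theorem card_le_mul_card_biUnion_of_deadlines {k : ℕ} (hk : 0 < k) {m : α → ι}
    {P : α → Prop} [DecidablePred P] (hinj : Set.InjOn m {a | P a})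
    (hcount : ∀ t, #{a | m a ≤ t} ≤ k * #(Iic t)) (s : Finset α) :
    #s ≤ k * #(s.biUnion fun a => if P a then {m a} else Iic (m a)) := by
  set U := s.biUnion fun a => if P a then {m a} else Iic (m a)
  have hmU : ∀ a ∈ s, m a ∈ U := fun a ha => mem_biUnion.2 ⟨a, ha, by split_ifs <;> simp⟩
  by_cases hfree : ∃ a ∈ s, ¬ P a
  · obtain ⟨a₀, ha₀, hmax⟩ := exists_max_image {a ∈ s | ¬ P a} m (by simpa [Finset.Nonempty])
    rw [mem_filter] at ha₀
    have hIic : Iic (m a₀) ⊆ U := fun i hi => mem_biUnion.2 ⟨a₀, ha₀.1, by simpa [ha₀.2] using hi⟩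
    have hlow : #{a ∈ s | m a ≤ m a₀} ≤ k * #(Iic (m a₀)) :=
      (card_le_card (filter_subset_filter _ (subset_univ s))).trans (hcount _)
    -- elements scheduled later than every free element of `s` are pinned, hence separated by `m`
    have hhigh : #{a ∈ s | ¬ m a ≤ m a₀} ≤ #(U \ Iic (m a₀)) := by
      refine card_le_card_of_injOn m (fun a ha => ?_) (hinj.mono fun a ha => ?_)
      · rw [mem_coe, mem_filter] at ha
        simpa [hmU a ha.1] using ha.2
      · rw [mem_coe, mem_filter] at ha
        by_contra hPa
        exact ha.2 (hmax a (mem_filter.2 ⟨ha.1, hPa⟩))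
    calc #s = #{a ∈ s | m a ≤ m a₀} + #{a ∈ s | ¬ m a ≤ m a₀} :=
          (card_filter_add_card_filter_not _).symm
      _ ≤ k * #(Iic (m a₀)) + k * #(U \ Iic (m a₀)) :=
          add_le_add hlow (hhigh.trans (Nat.le_mul_of_pos_left _ hk))
      _ = k * #U := by rw [← mul_add, add_comm, card_sdiff_add_card_eq_card hIic]
  · push Not at hfree
    calc #s ≤ #U := card_le_card_of_injOn m hmU (hinj.mono hfree)
      _ ≤ k * #U := Nat.le_mul_of_pos_left _ hk

theorem exists_schedule_of_card_le_mul (k : ℕ) (m : α → ι) (P : α → Prop)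
    (hinj : Set.InjOn m {a | P a}) (hcount : ∀ t, #{a | m a ≤ t} ≤ k * #(Iic t)) :
    ∃ σ : α → ι, (∀ a, σ a ≤ m a) ∧ (∀ a, P a → σ a = m a) ∧ ∀ t, #{a | σ a = t} ≤ k := by
  classical
  rcases isEmpty_or_nonempty α with hα | ⟨⟨a⟩⟩
  · exact ⟨isEmptyElim, isEmptyElim, fun a => isEmptyElim a, fun t => by simp⟩
  have hk : 0 < k := by
    have hpos : 0 < #{b | m b ≤ m a} := card_pos.2 ⟨a, by simp⟩
    exact Nat.pos_of_mul_pos_right (hpos.trans_le (hcount (m a)))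
  -- Hall's theorem, with every index split into `k` copies
  set I : α → Finset ι := fun a => if P a then {m a} else Iic (m a)
  obtain ⟨f, hf, hfI⟩ := (all_card_le_biUnion_card_iff_exists_injective
      fun a => I a ×ˢ (univ : Finset (Fin k))).1 fun s => by
    have : s.biUnion (fun a => I a ×ˢ (univ : Finset (Fin k))) = s.biUnion I ×ˢ univ := by
      ext; simp
    rw [this, card_product, card_univ, Fintype.card_fin, mul_comm]
    exact card_le_mul_card_biUnion_of_deadlines hk hinj hcount s
  refine ⟨fun a => (f a).1, fun a => ?_, fun a hPa => ?_, fun t => ?_⟩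
  · have := (mem_product.1 (hfI a)).1
    simp only [I] at this
    split_ifs at this
    · exact (mem_singleton.1 this).le
    · exact mem_Iic.1 this
  · simpa [I, hPa] using (mem_product.1 (hfI a)).1
  · calc #{a | (f a).1 = t} ≤ #({t} ×ˢ (univ : Finset (Fin k))) :=
          card_le_card_of_injOn f (fun a ha =>
            mem_product.2 ⟨mem_singleton.2 (mem_filter.1 ha).2, mem_univ _⟩) hf.injOn
      _ = k := by simp

end Schedule

section Deadline

variable {N : Type*} [DecidableEq N] {Indep : Finset N → Prop} {q : ℕ} (z : Fin q → N)

theorem exists_last_indep_insert_prefixSet {u : N} (hu : Indep {u})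
    (hS : ¬ Indep (insert u (univ.image z))) :
    ∃ i, Indep (insert u (prefixSet z i)) ∧ ¬ Indep (insert u (closedPrefix z i)) := by
  classical
  obtain ⟨n, rfl⟩ : ∃ n, q = n + 1 := Nat.exists_eq_succ_of_ne_zero <| by
    rintro rfl
    simp_all
  obtain ⟨i, hi, hmax⟩ := exists_max_image {i | Indep (insert u (prefixSet z i))} id
    ⟨0, by simpa [prefixSet_zero] using hu⟩
  refine ⟨i, (mem_filter.1 hi).2, ?_⟩
  rcases Fin.eq_castSucc_or_eq_last i with ⟨j, rfl⟩ | rfl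
  · rw [← prefixSet_succ]
    intro hsucc
    exact Fin.castSucc_lt_succ.not_ge (hmax j.succ (mem_filter.2 ⟨mem_univ _, hsucc⟩))
  · rwa [closedPrefix_last]

theorem exists_deadline (hpref : ∀ i, Indep (insert (z i) (prefixSet z i))) {u : N}
    (hu : Indep {u}) (hblock : ¬ Indep (insert u (univ.image z)) ∨ u ∈ univ.image z) :
    ∃ i, (u ∈ univ.image z → z i = u) ∧ Indep (insert u (prefixSet z i)) ∧
      Spans Indep (closedPrefix z i) u := by
  by_cases huS : u ∈ univ.image z
  · obtain ⟨i, -, rfl⟩ := mem_image.1 huS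
    refine ⟨i, fun _ => rfl, hpref i, Or.inl ?_⟩
    rw [← insert_prefixSet]
    exact mem_insert_self _ _
  · obtain ⟨i, hi, hdep⟩ := exists_last_indep_insert_prefixSet z hu (hblock.resolve_right huS)
    exact ⟨i, fun h => absurd h huS, hi, Or.inr hdep⟩

theorem card_deadline_le (hdown : ∀ X Y : Finset N, X ⊆ Y → Indep Y → Indep X) {k : ℕ}
    (hksys : ∀ Y X₁ X₂ : Finset N, IsBaseOf Indep X₁ Y → IsBaseOf Indep X₂ Y →
      X₁.card ≤ k * X₂.card)
    (hpref : ∀ i, Indep (insert (z i) (prefixSet z i))) {Q : Finset N} (hQ : Indep Q)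
    (m : {u // u ∈ Q} → Fin q) (hspan : ∀ u, Spans Indep (closedPrefix z (m u)) u.1) (t : Fin q) :
    #{u | m u ≤ t} ≤ k * #(Iic t) := by
  set A := ({u | m u ≤ t} : Finset {u // u ∈ Q}).map (.subtype _)
  have hAQ : A ⊆ Q := fun x hx => by
    obtain ⟨u, -, rfl⟩ := mem_map.1 hx
    exact u.2
  have hAspan : ∀ x ∈ A, Spans Indep (closedPrefix z t) x := fun x hx => by
    obtain ⟨u, hu, rfl⟩ := mem_map.1 hx
    exact (hspan u).mono hdown (closedPrefix_mono z (mem_filter.1 hu).2)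
  calc #{u | m u ≤ t} = #A := (card_map _).symm
    _ ≤ k * #(closedPrefix z t) :=
        card_le_mul_card_of_spans hksys (hdown _ _ hAQ hQ) (insert_prefixSet z t ▸ hpref t) hAspan
    _ ≤ k * #(Iic t) := Nat.mul_le_mul_left _ (card_closedPrefix_le z t)

end Deadline

theorem mapping_lemma_general {N : Type*} [DecidableEq N]
    (Indep : Finset N → Prop) (k : ℕ)
    (hdown : ∀ X Y : Finset N, X ⊆ Y → Indep Y → Indep X)
    (hksys : ∀ Y X₁ X₂ : Finset N, IsBaseOf Indep X₁ Y → IsBaseOf Indep X₂ Y →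
      X₁.card ≤ k * X₂.card)
    (q : ℕ) (z : Fin q → N)
    (S : Finset N) (hSdef : S = Finset.univ.image z)
    (hSpref : ∀ i : Fin q, Indep (insert (z i) (prefixSet z i)))
    (Q : Finset N) (hQ : Indep Q)
    (hQblock : ∀ u ∈ Q, ¬ Indep (insert u S) ∨ u ∈ S) :
    ∃ σ : {u // u ∈ Q} → Fin q,
      (∀ u : {u // u ∈ Q}, Indep (insert u.val (prefixSet z (σ u)))) ∧
      (∀ t : Fin q, (Finset.univ.filter (fun u : {u // u ∈ Q} => σ u = t)).card ≤ k) ∧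
      (∀ u : {u // u ∈ Q}, u.val ∈ S → z (σ u) = u.val) := by
  subst hSdef
  choose m hm_pin hm_indep hm_span using fun u : {u // u ∈ Q} =>
    exists_deadline z hSpref (hdown _ _ (singleton_subset_iff.2 u.2) hQ) (hQblock u u.2)
  obtain ⟨σ, hσ_le, hσ_pin, hσ_fiber⟩ := exists_schedule_of_card_le_mul k m
    (fun u => u.1 ∈ univ.image z)
    (fun u hu v hv huv => Subtype.ext ((hm_pin u hu).symm.trans (huv ▸ hm_pin v hv)))
    (card_deadline_le z hdown hksys hSpref hQ m hm_span)
  exact ⟨σ, fun u => hdown _ _ (insert_subset_insert _ (prefixSet_mono z (hσ_le u))) (hm_indep u),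
    hσ_fiber, fun u hu => hσ_pin u hu ▸ hm_pin u hu⟩

/-- The mapping lemma: in a k-system, if every element of the independent set Q
    either cannot be added to S = {z₁,...,z_q} or already lies in S, then there is
    a mapping σ : Q → S such that each u ∈ Q can be added to the prefix of S
    preceding σ(u), each element of S has at most k preimages, and σ fixes Q ∩ S. -/
theorem mapping_lemma {N : Type*} [Fintype N] [DecidableEq N]
    (Indep : Finset N → Prop) (k : ℕ) (hk : 1 ≤ k)
    (hempty : Indep ∅)
    (hdown : ∀ X Y : Finset N, X ⊆ Y → Indep Y → Indep X)
    (hksys : ∀ Y X₁ X₂ : Finset N, IsBaseOf Indep X₁ Y → IsBaseOf Indep X₂ Y →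
      X₁.card ≤ k * X₂.card)
    (q : ℕ) (z : Fin q → N) (hzinj : Function.Injective z)
    (S : Finset N) (hSdef : S = Finset.univ.image z) (hS : Indep S)
    (hSpref : ∀ i : Fin q, Indep (insert (z i) (prefixSet z i)))
    (Q : Finset N) (hQ : Indep Q)
    (hQblock : ∀ u ∈ Q, ¬ Indep (insert u S) ∨ u ∈ S) :
    ∃ σ : {u // u ∈ Q} → Fin q,
      (∀ u : {u // u ∈ Q}, Indep (insert u.val (prefixSet z (σ u)))) ∧
      (∀ t : Fin q, (Finset.univ.filter (fun u : {u // u ∈ Q} => σ u = t)).card ≤ k) ∧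
      (∀ u : {u // u ∈ Q}, u.val ∈ S → z (σ u) = u.val) :=
  mapping_lemma_general Indep k hdown hksys q z S hSdef hSpref Q hQ hQblock
end

section
/- Suppose for each element u in a finite set N, a random process considers u at most once and, when considered with positive marginal weight δ(u) > 0, accepts u (event Y_u = 1) with probability exactly p and rejects u (event X_u = 1) with probability 1 - p, where δ(u) is measurable with respect to the history before u is considered. Then E[∑_u X_u·δ(u)] ≤ ((1-p)/p)·E[∑_u Y_u·δ(u)]. -/
/-!
Grouping outcomes by the history `H u`, the weight `δ(u) = d u (H u ω)` is constant on each
fibre, so the expectation of `∑ u, Z u · δ(u)` only depends on the masses of `Z u` on these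
fibres. On every fibre the rejected mass is `(1 - p) / p` times the accepted one, so the bound
even holds with equality.
-/

open Finset

section HistoryWeights

variable {N Ω α : Type*} [Fintype N] [Fintype Ω] [Fintype α] [DecidableEq α]

theorem sum_mul_mul_comp_eq_sum_fiber (μ Z : Ω → ℝ) (g : Ω → α) (f : α → ℝ) :
    ∑ ω, μ ω * (Z ω * f (g ω)) = ∑ h, f h * ∑ ω, if g ω = h then μ ω * Z ω else 0 := by
  rw [← sum_fiberwise univ g]
  refine sum_congr rfl fun h _ => ?_
  rw [sum_filter, mul_sum]
  refine sum_congr rfl fun ω _ => ?_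
  split_ifs with hω
  · rw [hω]; ring
  · rw [mul_zero]

theorem sum_mul_sum_comp_eq_sum_fiber (μ : Ω → ℝ) (H : N → Ω → α) (d : N → α → ℝ)
    (Z : N → Ω → ℝ) :
    ∑ ω, μ ω * ∑ u, Z u ω * d u (H u ω) =
      ∑ u, ∑ h, d u h * ∑ ω, if H u ω = h then μ ω * Z u ω else 0 := by
  rw [sum_congr rfl fun ω _ => mul_sum univ _ (μ ω), sum_comm]
  exact sum_congr rfl fun u _ => sum_mul_mul_comp_eq_sum_fiber μ (Z u) (H u) (d u)

theorem sum_mul_sum_comp_eq_const_mul_of_fiber_eq (μ : Ω → ℝ) (H : N → Ω → α)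
    (d : N → α → ℝ) (Z W : N → Ω → ℝ) (c : ℝ)
    (hZW : ∀ u h, ∑ ω, (if H u ω = h then μ ω * Z u ω else 0) =
      c * ∑ ω, (if H u ω = h then μ ω * W u ω else 0)) :
    ∑ ω, μ ω * ∑ u, Z u ω * d u (H u ω) = c * ∑ ω, μ ω * ∑ u, W u ω * d u (H u ω) := by
  rw [sum_mul_sum_comp_eq_sum_fiber, sum_mul_sum_comp_eq_sum_fiber, mul_sum]
  refine sum_congr rfl fun u _ => ?_
  rw [mul_sum]
  exact sum_congr rfl fun h _ => by rw [hZW, mul_left_comm]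

end HistoryWeights

theorem rejected_gain_bound_general {N Ω α : Type*} [Fintype N] [Fintype Ω] [Fintype α]
    [DecidableEq α]
    (μ : Ω → ℝ)
    (p : ℝ) (hp0 : 0 < p)
    (H : N → Ω → α)            -- the history before u is considered
    (d : N → α → ℝ)            -- δ(u) as a function of the history
    (X Y C : N → Ω → ℝ)        -- indicators: rejected, accepted, considered (with δ(u) > 0)
    (haccept : ∀ u : N, ∀ h : α,
      ∑ ω, (if H u ω = h then μ ω * Y u ω else 0) =
        p * ∑ ω, (if H u ω = h then μ ω * C u ω else 0))
    (hreject : ∀ u : N, ∀ h : α,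
      ∑ ω, (if H u ω = h then μ ω * X u ω else 0) =
        (1 - p) * ∑ ω, (if H u ω = h then μ ω * C u ω else 0)) :
    ∑ ω, μ ω * (∑ u : N, X u ω * d u (H u ω)) ≤
      ((1 - p) / p) * ∑ ω, μ ω * (∑ u : N, Y u ω * d u (H u ω)) := by
  refine le_of_eq (sum_mul_sum_comp_eq_const_mul_of_fiber_eq μ H d X Y _ fun u h => ?_)
  rw [hreject, haccept]
  field_simp

/-- A rejection/acceptance argument: each element u, when considered (event C), is
    accepted (Y) with conditional probability p and rejected (X) with probability 1-p,
    conditioned on the history H u (with respect to which the weight δ(u) = d u ∘ H u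
    is measurable).  Then E[∑ X_u δ(u)] ≤ ((1-p)/p) E[∑ Y_u δ(u)]. -/
theorem rejected_gain_bound {N Ω α : Type*} [Fintype N] [Fintype Ω] [Fintype α]
    [DecidableEq α]
    (μ : Ω → ℝ) (hμ0 : ∀ ω, 0 ≤ μ ω) (hμ1 : ∑ ω, μ ω = 1)
    (p : ℝ) (hp0 : 0 < p) (hp1 : p ≤ 1)
    (H : N → Ω → α)            -- the history before u is considered
    (d : N → α → ℝ)            -- δ(u) as a function of the history
    (hd0 : ∀ u h, 0 ≤ d u h)
    (X Y C : N → Ω → ℝ)        -- indicators: rejected, accepted, considered (with δ(u) > 0)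
    (hX01 : ∀ u ω, X u ω = 0 ∨ X u ω = 1)
    (hY01 : ∀ u ω, Y u ω = 0 ∨ Y u ω = 1)
    (hXYC : ∀ u ω, X u ω + Y u ω = C u ω)  -- considered = accepted or rejected
    (haccept : ∀ u : N, ∀ h : α,
      ∑ ω, (if H u ω = h then μ ω * Y u ω else 0) =
        p * ∑ ω, (if H u ω = h then μ ω * C u ω else 0))
    (hreject : ∀ u : N, ∀ h : α,
      ∑ ω, (if H u ω = h then μ ω * X u ω else 0) =
        (1 - p) * ∑ ω, (if H u ω = h then μ ω * C u ω else 0)) :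
    ∑ ω, μ ω * (∑ u : N, X u ω * d u (H u ω)) ≤
      ((1 - p) / p) * ∑ ω, μ ω * (∑ u : N, Y u ω * d u (H u ω)) :=
  rejected_gain_bound_general μ p hp0 H d X Y C haccept hreject
end
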